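/- arXiv:2507.00068 — 2 statements merged into one kernel-verified Lean document; each statement's English description precedes it below -/
import Mathlib

section
/- The InfoNCE lower bound: for jointly distributed random variables $(X, Y)$ on finite spaces and any positive scoring function $f$, with $K$ i.i.d. negative samples $Y_1', \dots, Y_K' \sim p_Y$ independent of $(X,Y)$, we have $\mathbb{E}\left[\log \frac{f(X,Y)}{f(X,Y) + \sum_{k=1}^K f(X, Y_k')}\right] + \log(K+1) \le I(X; Y)$ when $f(x,y) = p(y|x)/p(y)$ is the density ratio. -/
open Finset

/-- Sum over all functions of a product equals product of sums. -/
lemma infoNCE_sum_pi_prod {n : ℕ} {Y : Type*} [Fintype Y] (c : Fin n → Y → ℝ) :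
    ∑ g : Fin n → Y, ∏ i, c i (g i) = ∏ i, ∑ y, c i y := by
  rw [Finset.prod_univ_sum, Fintype.piFinset_univ]

/-- Symmetrization: the coordinate `j` singled out does not matter. -/
lemma infoNCE_sym {n : ℕ} {Y : Type*} [Fintype Y] (pY φ ψ : Y → ℝ) (h : ℝ → ℝ)
    (j : Fin (n + 1)) :
    ∑ g : Fin (n + 1) → Y, (∏ i, pY (g i)) * (φ (g j) * h (∑ i, ψ (g i)))
      = ∑ g : Fin (n + 1) → Y, (∏ i, pY (g i)) * (φ (g 0) * h (∑ i, ψ (g i))) := by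
  have hbij : Function.Bijective (fun g : Fin (n + 1) → Y => g ∘ (Equiv.swap 0 j)) := by
    have hinv : Function.Involutive (fun g : Fin (n + 1) → Y => g ∘ (Equiv.swap 0 j)) := by
      intro g
      funext i
      simp [Function.comp, Equiv.swap_apply_self]
    exact hinv.bijective
  refine (Fintype.sum_bijective _ hbij _ _ ?_).symm
  intro g
  simp only [Function.comp]
  rw [Equiv.prod_comp (Equiv.swap 0 j) (fun i => pY (g i)),
    Equiv.sum_comp (Equiv.swap 0 j) (fun i => ψ (g i)),
    Equiv.swap_apply_right]

/-- Reindex a sum over `Y × (Fin n → Y)` as a sum over `Fin (n+1) → Y` via `Fin.cons`. -/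
lemma infoNCE_cons_reindex {n : ℕ} {Y : Type*} [Fintype Y] (F : (Fin (n + 1) → Y) → ℝ) :
    ∑ y : Y, ∑ neg : Fin n → Y, F (Fin.cons y neg)
      = ∑ g : Fin (n + 1) → Y, F g := by
  rw [← Equiv.sum_comp (Fin.consEquiv (fun _ => Y)) F, Fintype.sum_prod_type]
  rfl

/-- InfoNCE lower bound: for finite `(X, Y)` with strictly positive joint pmf
`p`, marginals `pX, pY`, density-ratio score `f(x,y) = p(x,y)/(pX x · pY y)`, and `K`
i.i.d. negatives drawn from `pY` independently of `(X,Y)`,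
`E[log (f(X,Y) / (f(X,Y) + ∑_k f(X,Y'_k)))] + log (K+1) ≤ I(X;Y)`. -/
theorem infoNCE_lower_bound {X Y : Type*} [Fintype X] [Fintype Y]
    (p : X → Y → ℝ) (hp : ∀ x y, 0 < p x y) (hp1 : ∑ x, ∑ y, p x y = 1)
    (pX : X → ℝ) (pY : Y → ℝ)
    (hpX : ∀ x, pX x = ∑ y, p x y) (hpY : ∀ y, pY y = ∑ x, p x y)
    (f : X → Y → ℝ) (hf : ∀ x y, f x y = p x y / (pX x * pY y))
    (K : ℕ) :
    (∑ x, ∑ y, p x y *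
        ∑ neg : Fin K → Y, (∏ k, pY (neg k)) *
          Real.log (f x y / (f x y + ∑ k, f x (neg k))))
      + Real.log (K + 1)
    ≤ ∑ x, ∑ y, p x y * Real.log (p x y / (pX x * pY y)) := by
  -- nonemptiness
  have hYne : Nonempty Y := by
    by_contra h
    rw [not_nonempty_iff] at h
    simp at hp1
  have hXne : Nonempty X := by
    by_contra h
    rw [not_nonempty_iff] at h
    simp at hp1
  -- positivity facts
  have hpX0 : ∀ x, 0 < pX x := fun x => by
    rw [hpX]; exact Finset.sum_pos (fun y _ => hp x y) univ_nonempty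
  have hpY0 : ∀ y, 0 < pY y := fun y => by
    rw [hpY]; exact Finset.sum_pos (fun x _ => hp x y) univ_nonempty
  have hf0 : ∀ x y, 0 < f x y := fun x y => by
    rw [hf]; exact div_pos (hp x y) (mul_pos (hpX0 x) (hpY0 y))
  -- normalization facts
  have hsY : ∑ y, pY y = 1 := by
    simp_rw [hpY]; rw [Finset.sum_comm]; exact hp1
  have hpf : ∀ x y, pY y * f x y = p x y / pX x := fun x y => by
    have h1 := (hpX0 x).ne'
    have h2 := (hpY0 y).ne'
    rw [hf]
    field_simp
  have hXf : ∀ x, ∑ y, pY y * f x y = 1 := fun x => by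
    simp_rw [hpf, div_eq_mul_inv, ← Finset.sum_mul, ← hpX]
    exact mul_inv_cancel₀ (hpX0 x).ne'
  have hν1 : ∑ neg : Fin K → Y, ∏ k, pY (neg k) = 1 := by
    rw [infoNCE_sum_pi_prod]
    simp [hsY]
  have hK1 : (0 : ℝ) < (K : ℝ) + 1 := by positivity
  -- the per-x inner quantity, over K+1 samples
  set T : X → ℝ := fun x => ∑ g : Fin (K + 1) → Y,
      (∏ i, pY (g i)) * (f x (g 0) * Real.log ((∑ i, f x (g i)) / ((K : ℝ) + 1)))
    with hT
  -- Step 1: the difference RHS - LHS equals ∑ x, pX x * T x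
  have key : (∑ x, ∑ y, p x y * Real.log (p x y / (pX x * pY y)))
      - ((∑ x, ∑ y, p x y *
          ∑ neg : Fin K → Y, (∏ k, pY (neg k)) *
            Real.log (f x y / (f x y + ∑ k, f x (neg k))))
        + Real.log (K + 1))
      = ∑ x, pX x * T x := by
    have hlogK : Real.log ((K : ℝ) + 1)
        = ∑ x, ∑ y, p x y * Real.log ((K : ℝ) + 1) := by
      symm
      calc ∑ x, ∑ y, p x y * Real.log ((K : ℝ) + 1)
          = (∑ x, ∑ y, p x y) * Real.log ((K : ℝ) + 1) := by
            rw [Finset.sum_mul]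
            exact Finset.sum_congr rfl fun x _ => (Finset.sum_mul _ _ _).symm
        _ = Real.log ((K : ℝ) + 1) := by rw [hp1, one_mul]
    calc (∑ x, ∑ y, p x y * Real.log (p x y / (pX x * pY y)))
          - ((∑ x, ∑ y, p x y *
              ∑ neg : Fin K → Y, (∏ k, pY (neg k)) *
                Real.log (f x y / (f x y + ∑ k, f x (neg k))))
            + Real.log (K + 1))
        = ∑ x, ∑ y, ∑ neg : Fin K → Y,
            (p x y * (∏ k, pY (neg k))) *
              (Real.log (f x y) - Real.log (f x y / (f x y + ∑ k, f x (neg k)))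
                - Real.log ((K : ℝ) + 1)) := by
          nth_rewrite 1 [hlogK]
          rw [sub_add_eq_sub_sub, ← Finset.sum_sub_distrib, ← Finset.sum_sub_distrib]
          refine Finset.sum_congr rfl (fun x _ => ?_)
          rw [← Finset.sum_sub_distrib, ← Finset.sum_sub_distrib]
          refine Finset.sum_congr rfl (fun y _ => ?_)
          have h1 : p x y * Real.log (p x y / (pX x * pY y))
              = ∑ neg : Fin K → Y, (p x y * (∏ k, pY (neg k))) * Real.log (f x y) := by
            rw [← hf]
            rw [← Finset.sum_mul, ← Finset.mul_sum, hν1]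
            ring
          have h2 : p x y * Real.log ((K : ℝ) + 1)
              = ∑ neg : Fin K → Y, (p x y * (∏ k, pY (neg k))) * Real.log ((K : ℝ) + 1) := by
            rw [← Finset.sum_mul, ← Finset.mul_sum, hν1]
            ring
          rw [h1, h2, Finset.mul_sum, ← Finset.sum_sub_distrib, ← Finset.sum_sub_distrib]
          refine Finset.sum_congr rfl (fun neg _ => ?_)
          push_cast
          ring
      _ = ∑ x, pX x * T x := by
          refine Finset.sum_congr rfl (fun x _ => ?_)
          have hterm : ∀ (y : Y) (neg : Fin K → Y),
              (p x y * (∏ k, pY (neg k))) *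
                (Real.log (f x y) - Real.log (f x y / (f x y + ∑ k, f x (neg k)))
                  - Real.log ((K : ℝ) + 1))
              = pX x * ((∏ i, pY ((Fin.cons y neg : Fin (K+1) → Y) i)) *
                  (f x ((Fin.cons y neg : Fin (K+1) → Y) 0) *
                    Real.log ((∑ i, f x ((Fin.cons y neg : Fin (K+1) → Y) i)) / ((K : ℝ) + 1)))) := by
            intro y neg
            have hS : 0 < f x y + ∑ k, f x (neg k) := by
              have : 0 ≤ ∑ k, f x (neg k) :=
                Finset.sum_nonneg (fun k _ => (hf0 x (neg k)).le)
              linarith [hf0 x y]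
            have hlog : Real.log (f x y) -
                Real.log (f x y / (f x y + ∑ k, f x (neg k))) - Real.log ((K : ℝ) + 1)
                = Real.log ((f x y + ∑ k, f x (neg k)) / ((K : ℝ) + 1)) := by
              rw [Real.log_div (hf0 x y).ne' hS.ne', Real.log_div hS.ne' hK1.ne']
              ring
            have hpxy : p x y = pX x * (pY y * f x y) := by
              have h1 := (hpX0 x).ne'
              have h2 := (hpY0 y).ne'
              rw [hf]; field_simp
            rw [hlog, hpxy]
            simp only [Fin.prod_univ_succ, Fin.sum_univ_succ, Fin.cons_zero, Fin.cons_succ]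
            push_cast
            ring
          calc ∑ y, ∑ neg : Fin K → Y,
                (p x y * (∏ k, pY (neg k))) *
                  (Real.log (f x y) - Real.log (f x y / (f x y + ∑ k, f x (neg k)))
                    - Real.log ((K : ℝ) + 1))
              = ∑ y, ∑ neg : Fin K → Y, pX x *
                  ((∏ i, pY ((Fin.cons y neg : Fin (K+1) → Y) i)) *
                    (f x ((Fin.cons y neg : Fin (K+1) → Y) 0) *
                      Real.log ((∑ i, f x ((Fin.cons y neg : Fin (K+1) → Y) i)) / ((K : ℝ) + 1)))) := by
                exact Finset.sum_congr rfl (fun y _ =>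
                  Finset.sum_congr rfl (fun neg _ => hterm y neg))
            _ = pX x * T x := by
                simp_rw [← Finset.mul_sum]
                rw [infoNCE_cons_reindex (fun g => (∏ i, pY (g i)) *
                  (f x (g 0) * Real.log ((∑ i, f x (g i)) / ((K : ℝ) + 1))))]
  -- Step 2: 0 ≤ T x for each x
  have hTnn : ∀ x, 0 ≤ T x := by
    intro x
    have hν0 : ∀ g : Fin (K + 1) → Y, 0 ≤ ∏ i, pY (g i) :=
      fun g => Finset.prod_nonneg (fun i _ => (hpY0 (g i)).le)
    -- sum of ν over all (K+1)-tuples is 1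
    have hν1' : ∑ g : Fin (K + 1) → Y, ∏ i, pY (g i) = 1 := by
      rw [infoNCE_sum_pi_prod]; simp [hsY]
    -- expectation of f x (g 0) is 1
    have hE0 : ∑ g : Fin (K + 1) → Y, (∏ i, pY (g i)) * f x (g 0) = 1 := by
      rw [← infoNCE_cons_reindex (fun g => (∏ i, pY (g i)) * f x (g 0))]
      have : ∀ y : Y, ∑ neg : Fin K → Y,
          (∏ i, pY ((Fin.cons y neg : Fin (K+1) → Y) i)) *
            f x ((Fin.cons y neg : Fin (K+1) → Y) 0)
          = pY y * f x y := by
        intro y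
        simp only [Fin.prod_univ_succ, Fin.cons_zero, Fin.cons_succ]
        rw [← Finset.sum_mul, ← Finset.mul_sum]
        rw [hν1]; ring
      simp_rw [this]
      exact hXf x
    -- expectation of S = ∑ i, f x (g i) is K + 1
    have hES : ∑ g : Fin (K + 1) → Y, (∏ i, pY (g i)) * (∑ i, f x (g i))
        = (K : ℝ) + 1 := by
      have : ∀ g : Fin (K + 1) → Y, (∏ i, pY (g i)) * (∑ i, f x (g i))
          = ∑ j : Fin (K + 1), (∏ i, pY (g i)) * f x (g j) :=
        fun g => Finset.mul_sum _ _ _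
      simp_rw [this]
      rw [Finset.sum_comm]
      have hj : ∀ j : Fin (K + 1),
          ∑ g : Fin (K + 1) → Y, (∏ i, pY (g i)) * f x (g j) = 1 := by
        intro j
        have := infoNCE_sym pY (f x) (f x) (fun _ => (1 : ℝ)) j
        simp only [mul_one] at this
        rw [this, hE0]
      simp_rw [hj]
      simp
    -- symmetrize T x
    have hsymT : ((K : ℝ) + 1) * T x
        = ∑ g : Fin (K + 1) → Y, (∏ i, pY (g i)) *
            ((∑ i, f x (g i)) * Real.log ((∑ i, f x (g i)) / ((K : ℝ) + 1))) := by
      have step : ∀ j : Fin (K + 1),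
          ∑ g : Fin (K + 1) → Y, (∏ i, pY (g i)) *
            (f x (g j) * Real.log ((∑ i, f x (g i)) / ((K : ℝ) + 1))) = T x :=
        fun j => infoNCE_sym pY (f x) (f x)
          (fun s => Real.log (s / ((K : ℝ) + 1))) j
      calc ((K : ℝ) + 1) * T x
          = ∑ j : Fin (K + 1), ∑ g : Fin (K + 1) → Y, (∏ i, pY (g i)) *
              (f x (g j) * Real.log ((∑ i, f x (g i)) / ((K : ℝ) + 1))) := by
            simp_rw [step]
            rw [Finset.sum_const, Finset.card_univ, Fintype.card_fin, nsmul_eq_mul]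
            push_cast
            try ring
        _ = ∑ g : Fin (K + 1) → Y, (∏ i, pY (g i)) *
              ((∑ i, f x (g i)) * Real.log ((∑ i, f x (g i)) / ((K : ℝ) + 1))) := by
            rw [Finset.sum_comm]
            refine Finset.sum_congr rfl (fun g _ => ?_)
            rw [Finset.sum_mul, Finset.mul_sum]
    -- pointwise inequality t log t ≥ t - 1 scaled
    have hpt : ∀ g : Fin (K + 1) → Y,
        (∑ i, f x (g i)) - ((K : ℝ) + 1)
          ≤ (∑ i, f x (g i)) * Real.log ((∑ i, f x (g i)) / ((K : ℝ) + 1)) := by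
      intro g
      set S := ∑ i, f x (g i) with hSdef
      have hS0 : 0 < S := Finset.sum_pos (fun i _ => hf0 x (g i)) univ_nonempty
      have ht0 : 0 < S / ((K : ℝ) + 1) := div_pos hS0 hK1
      have hlog := Real.log_le_sub_one_of_pos (show (0:ℝ) < ((K : ℝ) + 1) / S from
        div_pos hK1 hS0)
      rw [Real.log_div hK1.ne' hS0.ne'] at hlog
      have hlog' : Real.log (S / ((K : ℝ) + 1))
          = Real.log S - Real.log ((K : ℝ) + 1) := Real.log_div hS0.ne' hK1.ne'
      rw [hlog']
      have h2 : ((K : ℝ) + 1) / S - 1 = (((K : ℝ) + 1) - S) / S := by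
        field_simp
      rw [h2] at hlog
      -- hlog : log (K+1) - log S ≤ ((K+1) - S)/S
      have := mul_le_mul_of_nonneg_left hlog hS0.le
      rw [mul_div_cancel₀ _ hS0.ne'] at this
      nlinarith
    have hsum : ∑ g : Fin (K + 1) → Y, (∏ i, pY (g i)) *
        ((∑ i, f x (g i)) - ((K : ℝ) + 1))
        ≤ ∑ g : Fin (K + 1) → Y, (∏ i, pY (g i)) *
            ((∑ i, f x (g i)) * Real.log ((∑ i, f x (g i)) / ((K : ℝ) + 1))) :=
      Finset.sum_le_sum (fun g _ =>
        mul_le_mul_of_nonneg_left (hpt g) (hν0 g))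
    have hleft : ∑ g : Fin (K + 1) → Y, (∏ i, pY (g i)) *
        ((∑ i, f x (g i)) - ((K : ℝ) + 1)) = 0 := by
      simp_rw [mul_sub]
      rw [Finset.sum_sub_distrib, hES, ← Finset.sum_mul, hν1']
      ring
    have : 0 ≤ ((K : ℝ) + 1) * T x := by
      rw [hsymT]
      rw [← hleft]
      exact hsum
    nlinarith [this, hK1]
  -- conclude
  have : 0 ≤ ∑ x, pX x * T x :=
    Finset.sum_nonneg (fun x _ => mul_nonneg (hpX0 x).le (hTnn x))
  linarith [key]
end

section
/- Let $f : \mathcal{P}(U) \to \mathbb{R}$ be a monotone submodular set function with $f(\emptyset) = 0$. The greedy algorithm that at each step adds the element with maximum marginal gain, selecting exactly $k$ elements, achieves $f(S_k) \ge (1 - (1 - 1/k)^k) \cdot \max_{|T| = k} f(T) \ge (1 - 1/e) \cdot \max_{|T| = k} f(T)$. -/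
open Finset

/-- For a monotone submodular `f` with `f ∅ = 0`, the greedy algorithm
selecting `k` elements by maximal marginal gain satisfies
`f (S k) ≥ (1 - (1 - 1/k)^k) · max_{|T| = k} f T ≥ (1 - 1/e) · max_{|T| = k} f T`. -/
theorem greedy_submodular_approximation {U : Type*} [DecidableEq U] [Fintype U]
    (f : Finset U → ℝ)
    (hmono : ∀ A B : Finset U, A ⊆ B → f A ≤ f B)
    (hsub : ∀ (A B : Finset U) (x : U), A ⊆ B → x ∉ B →
      f (insert x B) - f B ≤ f (insert x A) - f A)
    (hempty : f ∅ = 0)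
    (k : ℕ) (hk : 0 < k)
    (S : ℕ → Finset U) (hS0 : S 0 = ∅)
    (hgreedy : ∀ t < k, ∃ x : U, x ∉ S t ∧ S (t + 1) = insert x (S t) ∧
      ∀ y : U, f (insert y (S t)) - f (S t) ≤ f (insert x (S t)) - f (S t)) :
    ∀ T : Finset U, T.card = k →
      (1 - (1 - 1 / (k : ℝ)) ^ k) * f T ≤ f (S k) ∧
      (1 - 1 / Real.exp 1) * f T ≤ f (S k) := by
  intro T hT
  have hfT0 : 0 ≤ f T := by rw [← hempty]; exact hmono ∅ T (empty_subset T)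
  have hkpos : (0:ℝ) < k := by exact_mod_cast hk
  have hk1 : (1:ℝ) ≤ k := by exact_mod_cast hk
  have hnonneg : (0:ℝ) ≤ 1 - 1 / k := by
    have : (1:ℝ)/k ≤ 1 := by rw [div_le_one hkpos]; exact hk1
    linarith
  -- telescoping lemma
  have tele : ∀ (C A : Finset U), f (A ∪ C) - f A ≤ ∑ y ∈ C, (f (insert y A) - f A) := by
    intro C
    induction C using Finset.induction_on with
    | empty => intro A; simp
    | @insert x C hx ih =>
      intro A
      rw [Finset.sum_insert hx, Finset.union_insert]
      have key : f (insert x (A ∪ C)) - f (A ∪ C) ≤ f (insert x A) - f A := by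
        by_cases hxm : x ∈ A ∪ C
        · rw [Finset.insert_eq_of_mem hxm]
          have := hmono A (insert x A) (Finset.subset_insert x A)
          linarith
        · exact hsub A (A ∪ C) x Finset.subset_union_left hxm
      have := ih A
      linarith
  -- one step of the recurrence
  have step : ∀ t < k, f T - f (S (t+1)) ≤ (1 - 1/(k:ℝ)) * (f T - f (S t)) := by
    intro t ht
    obtain ⟨x, hx, hS1, hmax⟩ := hgreedy t ht
    have h1 : f T ≤ f (S t ∪ T) := hmono T _ Finset.subset_union_right
    have h2 := tele T (S t)
    have h3 : ∑ y ∈ T, (f (insert y (S t)) - f (S t)) ≤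
        (k:ℝ) * (f (S (t+1)) - f (S t)) := by
      calc ∑ y ∈ T, (f (insert y (S t)) - f (S t))
          ≤ ∑ _y ∈ T, (f (S (t+1)) - f (S t)) := by
            apply Finset.sum_le_sum
            intro y _
            rw [hS1]; exact hmax y
        _ = (k:ℝ) * (f (S (t+1)) - f (S t)) := by
            rw [Finset.sum_const, hT, nsmul_eq_mul]
    have h4 : f T - f (S t) ≤ (k:ℝ) * (f (S (t+1)) - f (S t)) := by linarith
    have h5 : (f T - f (S t)) / k ≤ f (S (t+1)) - f (S t) := by
      rw [div_le_iff₀ hkpos]; linarith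
    have h6 : (1 - 1/(k:ℝ)) * (f T - f (S t)) =
        (f T - f (S t)) - (f T - f (S t)) / k := by
      field_simp
    linarith
  -- induction
  have main : ∀ t, t ≤ k → f T - f (S t) ≤ (1 - 1/(k:ℝ))^t * f T := by
    intro t
    induction t with
    | zero => intro _; simp [hS0, hempty]
    | succ t ih =>
      intro ht
      have ht' : t < k := ht
      have h1 := step t ht'
      have h2 := ih (le_of_lt ht')
      have h3 : (1 - 1/(k:ℝ)) * (f T - f (S t)) ≤
          (1 - 1/(k:ℝ)) * ((1 - 1/(k:ℝ))^t * f T) :=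
        mul_le_mul_of_nonneg_left h2 hnonneg
      calc f T - f (S (t+1)) ≤ (1 - 1/(k:ℝ)) * (f T - f (S t)) := h1
        _ ≤ (1 - 1/(k:ℝ)) * ((1 - 1/(k:ℝ))^t * f T) := h3
        _ = (1 - 1/(k:ℝ))^(t+1) * f T := by ring
  have hmain := main k le_rfl
  constructor
  · nlinarith [hmain]
  · have hexp : (1 - 1/(k:ℝ))^k ≤ 1 / Real.exp 1 := by
      have h1 : (1 - 1/(k:ℝ)) ≤ Real.exp (-(1/k)) := by
        have := Real.add_one_le_exp (-(1/(k:ℝ)))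
        linarith
      have h2 : (1 - 1/(k:ℝ))^k ≤ (Real.exp (-(1/k)))^k :=
        pow_le_pow_left₀ hnonneg h1 k
      have h3 : (Real.exp (-(1/(k:ℝ))))^k = Real.exp ((k:ℝ) * (-(1/k))) :=
        (Real.exp_nat_mul _ k).symm
      have h4 : (k:ℝ) * (-(1/k)) = -1 := by field_simp
      rw [h3, h4, Real.exp_neg, ← one_div] at h2
      exact h2
    have : (1 - 1 / Real.exp 1) * f T ≤ (1 - (1 - 1/(k:ℝ))^k) * f T := by
      apply mul_le_mul_of_nonneg_right _ hfT0
      linarith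
    nlinarith [hmain]
end
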